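/- For all s1, s2 in the factorization semigroup S(G,O), one has s1·s2 = s2·ρ(α(s2)^{-1})(s1). -/

import Mathlib

/-- The defining relations of the factorization semigroup `S(G,O)`:
`x_{g₁} ⬝ x_{g₂} = x_{g₂} ⬝ x_{g₂⁻¹ g₁ g₂}`. -/
inductive FactRel (G : Type) [Group G] (O : Set G) :
    FreeSemigroup {g : G // g ∈ O} → FreeSemigroup {g : G // g ∈ O} → Prop
  | rel (g₁ g₂ : {g : G // g ∈ O}) (h : (g₂ : G)⁻¹ * g₁ * g₂ ∈ O) :
      FactRel G O (FreeSemigroup.of g₁ * FreeSemigroup.of g₂)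
        (FreeSemigroup.of g₂ * FreeSemigroup.of ⟨(g₂ : G)⁻¹ * g₁ * g₂, h⟩)

/-- The factorization semigroup `S(G,O)`. -/
def FactS (G : Type) [Group G] (O : Set G) :=
  (conGen (FactRel G O)).Quotient

instance (G : Type) [Group G] (O : Set G) : Semigroup (FactS G O) :=
  Con.semigroup _

/-- The generator `x_g` of `S(G,O)`. -/
def xg {G : Type} [Group G] {O : Set G} (g : {g : G // g ∈ O}) : FactS G O :=
  (conGen (FactRel G O)).toQuotient (FreeSemigroup.of g)

/-!
The identity for `s₂ = x * y` follows from those for `x` and `y` because `α` and `ρ` are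
multiplicative, so it suffices to move `s₁` past a generator `x_g`. That case is multiplicative in
`s₁` because `ρ g⁻¹` is an automorphism, and for `s₁ = x_{g₁}` it is the defining relation.
-/

section TwistedCommute

variable {S G : Type*} [Semigroup S] [Group G]

theorem twistedCommute_mul_left {ρ : G →* MulAut S} {g : G} {a b x : S}
    (ha : a * x = x * ρ g a) (hb : b * x = x * ρ g b) :
    a * b * x = x * ρ g (a * b) := by
  rw [map_mul, mul_assoc, hb, ← mul_assoc, ha, mul_assoc]

theorem twistedCommute_mul_right (α : S →ₙ* G) (ρ : G →* MulAut S) {x y : S}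
    (hx : ∀ s, s * x = x * ρ (α x)⁻¹ s) (hy : ∀ s, s * y = y * ρ (α y)⁻¹ s) (s : S) :
    s * (x * y) = x * y * ρ (α (x * y))⁻¹ s := by
  rw [← mul_assoc, hx, mul_assoc, hy, mul_assoc, map_mul, mul_inv_rev, map_mul]
  rfl

end TwistedCommute

namespace FactS

variable {G : Type} [Group G] {O : Set G}

@[elab_as_elim]
theorem induction_on {P : FactS G O → Prop} (s : FactS G O) (generator : ∀ g, P (xg g))
    (mul : ∀ a b, P a → P b → P (a * b)) : P s := by
  induction s using Con.induction_on with
  | H w =>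
    induction w using FreeSemigroup.recOnMul with
    | ih1 g => exact generator g
    | ih2 g w _ hw => exact mul _ _ (generator g) hw

theorem xg_mul_xg (g₁ g₂ : {g : G // g ∈ O}) (h : (g₂ : G)⁻¹ * g₁ * g₂ ∈ O) :
    xg g₁ * xg g₂ = xg g₂ * xg ⟨(g₂ : G)⁻¹ * g₁ * g₂, h⟩ :=
  (Con.eq _).2 (ConGen.Rel.of _ _ (FactRel.rel g₁ g₂ h))

end FactS

theorem stmt3 (G : Type) [Group G] (O : Set G)
    (hO : ∀ g ∈ O, ∀ h : G, h⁻¹ * g * h ∈ O)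
    (α : FactS G O →ₙ* G) (hα : ∀ g : {g : G // g ∈ O}, α (xg g) = (g : G))
    (ρ : G →* MulAut (FactS G O))
    (hρ : ∀ (h : G) (g : G) (hg : g ∈ O),
      ρ h (xg ⟨g, hg⟩) = xg ⟨h * g * h⁻¹, by simpa using hO g hg h⁻¹⟩) :
    ∀ s₁ s₂ : FactS G O, s₁ * s₂ = s₂ * ρ ((α s₂)⁻¹) s₁ := by
  have past_generator (g : {g : G // g ∈ O}) (s₁ : FactS G O) :
      s₁ * xg g = xg g * ρ ((α (xg g))⁻¹) s₁ := by
    rw [hα]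
    induction s₁ using FactS.induction_on with
    | generator g₁ =>
      rw [hρ _ _ g₁.2]
      simpa using FactS.xg_mul_xg g₁ g (hO g₁ g₁.2 g)
    | mul a b ha hb => exact twistedCommute_mul_left ha hb
  intro s₁ s₂
  induction s₂ using FactS.induction_on generalizing s₁ with
  | generator g => exact past_generator g s₁
  | mul x y hx hy => exact twistedCommute_mul_right α ρ hx hy s₁
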